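/- For every integer n ≥ 2, the sum over all type-B permutation tableaux T of size n of the number of indices k with 2 ≤ k ≤ n such that the (k-1)-th and k-th border steps of T are both south steps equals ((2n-1)/24)·|B_n|; equivalently, the expected number of pairs of adjacent south steps in a uniformly random type-B permutation tableau of size n is (2n-1)/24. -/

import Mathlib

/-- A type-B permutation tableau of size `n`, encoded via its border steps and filling.

Border steps are indexed by `Fin n` (index `i` is the `(i+1)`-th step from the
northeast corner); `west i = true` means the `(i+1)`-th step is a west step
(giving a column) and `west i = false` means it is a south step (giving a row
of the original, unshifted diagram).

Rows of the shifted diagram are also indexed by `Fin n`: a south step `r` indexes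
the corresponding original row, and a west step `r` indexes the inserted diagonal
row whose diagonal cell lies in the column of `r`.  The cell in row `r` and the
column of a west step `c` exists iff (`r` is south and `r < c`) or (`r` is west
and `r ≤ c`); in particular the diagonal cell of the column of `c` is `(c, c)`.
Columns are ordered left-to-right by decreasing step index, rows top-to-bottom as:
diagonal rows by decreasing step index, then original rows by increasing step index.

`filling r c = true` means the cell `(r, c)` contains a 1; `filling` is `false`
outside the cells of the diagram (field `support`).  The fields `col_one`,
`no_bad_zero` and `diag_zero` are the three defining conditions of a type-B
permutation tableau. -/
structure TypeBTableau (n : ℕ) where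
  west : Fin n → Bool
  filling : Fin n → Fin n → Bool
  support : ∀ r c : Fin n, filling r c = true →
    west c = true ∧ ((west r = false ∧ (r : ℕ) < (c : ℕ)) ∨ (west r = true ∧ (r : ℕ) ≤ (c : ℕ)))
  col_one : ∀ c : Fin n, west c = true → ∃ r : Fin n, filling r c = true
  no_bad_zero : ∀ r c : Fin n,
    (west c = true ∧ ((west r = false ∧ (r : ℕ) < (c : ℕ)) ∨ (west r = true ∧ (r : ℕ) ≤ (c : ℕ)))) →
    filling r c = false →
    ¬((∃ r' : Fin n,
        ((west r' = true ∧ west r = false) ∨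
         (west r' = true ∧ west r = true ∧ (r : ℕ) < (r' : ℕ)) ∨
         (west r' = false ∧ west r = false ∧ (r' : ℕ) < (r : ℕ))) ∧
        filling r' c = true) ∧
      (∃ c' : Fin n, (c : ℕ) < (c' : ℕ) ∧ filling r c' = true))
  diag_zero : ∀ j : Fin n, west j = true → filling j j = false →
    ∀ c : Fin n, filling j c = false

namespace TypeBTableau

noncomputable instance instFintype {n : ℕ} : Fintype (TypeBTableau n) :=
  Fintype.ofInjective (fun T => (T.west, T.filling)) (by
    rintro ⟨w1, f1, _, _, _, _⟩ ⟨w2, f2, _, _, _, _⟩ h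
    simp only [Prod.mk.injEq] at h
    obtain ⟨h1, h2⟩ := h
    subst h1; subst h2; rfl)

end TypeBTableau

open Finset

/-- The number of pairs of adjacent south steps of a type-B permutation tableau,
i.e. the number of indices `k` with `2 ≤ k ≤ n` such that the `(k-1)`-th and the
`k`-th border steps are both south steps (encoded as pairs of consecutive
step indices that are both south). -/
def TypeBTableau.adjSouth {n : ℕ} (T : TypeBTableau n) : ℕ :=
  (Finset.univ.filter (fun p : Fin n × Fin n =>
      (p.1 : ℕ) + 1 = (p.2 : ℕ) ∧ T.west p.1 = false ∧ T.west p.2 = false)).card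

open scoped Nat

/-!
Tableaux of size `n + 1` arise from those of size `n` by appending one border step. A south step
adds an empty bottom row. A west step adds a leftmost column, determined by its diagonal cell and
by the set of old rows that receive a `1`; these must be *free* rows, where a `1` creates no
forbidden `0`. If `T` has `u` free rows, its extensions contribute `2y(1+y)^u` to the generating
function `F_n(y) = ∑ y^(#free rows)`, so `F_{n+1}(y) = 2y F_n(1+y)` and
`F_n(y) = 2^n y(y+1)⋯(y+n-1)`; in particular `|B_n| = 2^n n!`. Forcing steps `i` and `i+1` to be
south and running the same recursion counts `2^(n-2) (n-2)! (n-1-i)^2` tableaux, and summing over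
`i` gives the claim.
-/

section PowersetSum

variable {α β R : Type*} [CommRing R]

theorem sum_powerset_pow_card_add_one (V : Finset α) (y : R) :
    ∑ s ∈ V.powerset, y ^ (#s + 1) = y * (1 + y) ^ #V := by
  rw [add_comm 1 y, ← sum_pow_mul_eq_add_pow, mul_sum]
  exact sum_congr rfl fun s _ => by rw [one_pow, mul_one, pow_succ']

theorem sum_powerset_pow_card_filter_mem_or_le [DecidableEq α] [LinearOrder β] {k : α → β}
    [∀ s : Finset α, DecidablePred fun r => r ∈ s ∨ ∀ r' ∈ s, k r ≤ k r']
    (hk : k.Injective) (V : Finset α) (y : R) :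
    ∑ s ∈ V.powerset, y ^ #(V.filter fun r => r ∈ s ∨ ∀ r' ∈ s, k r ≤ k r') =
      y * (1 + y) ^ #V + y ^ #V - y ^ (#V + 1) := by
  induction V using Finset.induction_on_min_value k with
  | empty => simp
  | insert a V ha hmin ih =>
    have hlt : ∀ x ∈ V, k a < k x := fun x hx =>
      (hmin x hx).lt_of_ne fun h => ha (hk h ▸ hx)
    -- `a` is the minimum: it always counts, and once in `s` it excludes every other `r ∉ s`
    have without_a : ∀ s ∈ V.powerset,
        #((insert a V).filter fun r => r ∈ s ∨ ∀ r' ∈ s, k r ≤ k r') =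
          #(V.filter fun r => r ∈ s ∨ ∀ r' ∈ s, k r ≤ k r') + 1 := fun s hs => by
      rw [filter_insert, if_pos (Or.inr fun r' hr' => hmin r' (mem_powerset.1 hs hr')),
        card_insert_of_notMem fun h => ha (mem_filter.1 h).1]
    have with_a : ∀ s ∈ V.powerset,
        #((insert a V).filter fun r => r ∈ insert a s ∨ ∀ r' ∈ insert a s, k r ≤ k r') =
          #s + 1 := fun s hs => by
      rw [← card_insert_of_notMem fun h => ha (mem_powerset.1 hs h)]
      congr 1
      ext r
      simp only [mem_filter, mem_insert, forall_eq_or_imp]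
      constructor
      · rintro ⟨hr, h | ⟨hle, -⟩⟩
        · exact h
        · rcases hr with rfl | hr
          · exact Or.inl rfl
          · exact absurd hle (not_le.2 (hlt r hr))
      · rintro (rfl | h)
        · exact ⟨Or.inl rfl, Or.inl (Or.inl rfl)⟩
        · exact ⟨Or.inr (mem_powerset.1 hs h), Or.inl (Or.inr h)⟩
    rw [sum_powerset_insert ha, card_insert_of_notMem ha,
      sum_congr rfl fun s hs => congrArg (y ^ ·) (without_a s hs),
      sum_congr rfl fun s hs => congrArg (y ^ ·) (with_a s hs), sum_powerset_pow_card_add_one]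
    simp only [pow_succ, ← sum_mul, ih]
    ring

end PowersetSum

namespace TypeBTableau

variable {n : ℕ} {R : Type*} [CommRing R]

@[ext]
theorem ext {T S : TypeBTableau n} (hw : T.west = S.west) (hf : T.filling = S.filling) :
    T = S := by
  cases T; cases S; simp_all

def IsCell (T : TypeBTableau n) (r c : Fin n) : Prop :=
  T.west c = true ∧
    ((T.west r = false ∧ (r : ℕ) < (c : ℕ)) ∨ (T.west r = true ∧ (r : ℕ) ≤ (c : ℕ)))

def IsAbove (T : TypeBTableau n) (r' r : Fin n) : Prop :=
  (T.west r' = true ∧ T.west r = false) ∨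
  (T.west r' = true ∧ T.west r = true ∧ (r : ℕ) < (r' : ℕ)) ∨
  (T.west r' = false ∧ T.west r = false ∧ (r' : ℕ) < (r : ℕ))

/-- Rows are numbered from the top of the shifted diagram. -/
def rowPos (T : TypeBTableau n) (r : Fin n) : ℕ :=
  if T.west r = true then n - 1 - r else n + r

theorem isAbove_iff_rowPos_lt {T : TypeBTableau n} {r' r : Fin n} :
    T.IsAbove r' r ↔ T.rowPos r' < T.rowPos r := by
  have := r.isLt; have := r'.isLt
  unfold IsAbove rowPos
  cases T.west r' <;> cases T.west r <;> simp <;> omega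

theorem rowPos_injective (T : TypeBTableau n) : T.rowPos.Injective := by
  intro r r' h
  have := r.isLt; have := r'.isLt
  unfold rowPos at h
  ext
  cases hr : T.west r <;> cases hr' : T.west r' <;> simp [hr, hr'] at h <;> omega

/-- A row is free if a `1` may be put into it in a new leftmost column: its diagonal cell, if it
has one, holds a `1`, and none of its `0`s has a `1` above it. -/
def IsFreeRow (T : TypeBTableau n) (r : Fin n) : Prop :=
  (T.west r = true → T.filling r r = true) ∧
  ∀ c r', T.IsCell r c → T.filling r c = false → T.IsAbove r' r → T.filling r' c = false

open scoped Classical in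
noncomputable def freeRows (T : TypeBTableau n) : Finset (Fin n) :=
  univ.filter T.IsFreeRow

@[simp]
theorem mem_freeRows {T : TypeBTableau n} {r : Fin n} : r ∈ T.freeRows ↔ T.IsFreeRow r := by
  simp [freeRows]

/-- Deletes the last border step. -/
def restrict (T : TypeBTableau (n + 1)) : TypeBTableau n where
  west i := T.west i.castSucc
  filling r c := T.filling r.castSucc c.castSucc
  support r c h := by simpa using T.support r.castSucc c.castSucc h
  col_one c hc := by
    obtain ⟨r, hr⟩ := T.col_one c.castSucc hc
    have hrc : (r : ℕ) < n := by
      have := c.isLt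
      rcases (T.support _ _ hr).2 with ⟨_, h⟩ | ⟨_, h⟩ <;> simp at h <;> omega
    exact ⟨⟨r, hrc⟩, hr⟩
  no_bad_zero r c hcell h0 := by
    rintro ⟨⟨r', habv, h1⟩, ⟨c', hlt, h2⟩⟩
    exact T.no_bad_zero r.castSucc c.castSucc (by simpa using hcell) h0
      ⟨⟨r'.castSucc, by simpa using habv, h1⟩, ⟨c'.castSucc, by simpa using hlt, h2⟩⟩
  diag_zero j hj h0 c := T.diag_zero j.castSucc hj h0 c.castSucc

@[simp]
theorem restrict_west (T : TypeBTableau (n + 1)) (i : Fin n) :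
    T.restrict.west i = T.west i.castSucc := rfl

@[simp]
theorem restrict_filling (T : TypeBTableau (n + 1)) (r c : Fin n) :
    T.restrict.filling r c = T.filling r.castSucc c.castSucc := rfl

/-- Appends a south step, i.e. an empty bottom row. -/
def extS (T : TypeBTableau n) : TypeBTableau (n + 1) where
  west := Fin.snoc T.west false
  filling := Fin.snoc (fun r => Fin.snoc (T.filling r) false) fun _ => false
  support r c h := by
    induction r using Fin.lastCases with
    | last => simp at h
    | cast r =>
      induction c using Fin.lastCases with
      | last => simp at h
      | cast c => simpa using T.support r c (by simpa using h)
  col_one c hc := by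
    induction c using Fin.lastCases with
    | last => simp at hc
    | cast c =>
      obtain ⟨r, hr⟩ := T.col_one c (by simpa using hc)
      exact ⟨r.castSucc, by simpa using hr⟩
  no_bad_zero r c hcell h0 := by
    rintro ⟨⟨r', habv, h1⟩, c', hlt, h2⟩
    induction c using Fin.lastCases with
    | last => simp at hcell
    | cast c =>
      induction r using Fin.lastCases with
      | last =>
        have := c.isLt
        rcases hcell.2 with ⟨_, h⟩ | ⟨h, _⟩ <;> simp at h; omega
      | cast r =>
        induction r' using Fin.lastCases with
        | last => simp at h1
        | cast r' =>
          induction c' using Fin.lastCases with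
          | last => simp at h2
          | cast c' =>
            exact T.no_bad_zero r c (by simpa using hcell) (by simpa using h0)
              ⟨⟨r', by simpa using habv, by simpa using h1⟩, c', by simpa using hlt,
                by simpa using h2⟩
  diag_zero j hj h0 c := by
    induction j using Fin.lastCases with
    | last => simp at hj
    | cast j =>
      induction c using Fin.lastCases with
      | last => simp
      | cast c => simpa using T.diag_zero j (by simpa using hj) (by simpa using h0) c

/-- The admissible fillings `(b, s)` of a new leftmost column: `b` is its diagonal cell, `s` the
set of old rows that receive a `1`. -/
noncomputable def extChoices (T : TypeBTableau n) : Finset (Bool × Finset (Fin n)) :=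
  (univ ×ˢ T.freeRows.powerset).filter fun p => p.1 = true ∨ p.2.Nonempty

theorem mem_extChoices {T : TypeBTableau n} {p : Bool × Finset (Fin n)} :
    p ∈ T.extChoices ↔ p.2 ⊆ T.freeRows ∧ (p.1 = true ∨ p.2.Nonempty) := by
  simp [extChoices]

/-- Appends a west step, i.e. a new leftmost column filled according to `d`. -/
def extW (T : TypeBTableau n) (d : T.extChoices) : TypeBTableau (n + 1) where
  west := Fin.snoc T.west true
  filling := Fin.snoc (fun r => Fin.snoc (T.filling r) (decide (r ∈ d.1.2)))
    (Fin.snoc (fun _ => false) d.1.1)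
  support r c h := by
    induction r using Fin.lastCases with
    | last =>
      induction c using Fin.lastCases with
      | last => simp
      | cast c => simp at h
    | cast r =>
      induction c using Fin.lastCases with
      | last =>
        have := r.isLt
        cases hw : T.west r <;> simp [hw]
      | cast c => simpa using T.support r c (by simpa using h)
  col_one c hc := by
    induction c using Fin.lastCases with
    | last =>
      rcases (mem_extChoices.1 d.2).2 with hb | ⟨r, hr⟩
      · exact ⟨Fin.last n, by simpa using hb⟩
      · exact ⟨r.castSucc, by simpa using hr⟩
    | cast c =>
      obtain ⟨r, hr⟩ := T.col_one c (by simpa using hc)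
      exact ⟨r.castSucc, by simpa using hr⟩
  no_bad_zero r c hcell h0 := by
    rintro ⟨⟨r', habv, h1⟩, c', hlt, h2⟩
    induction c using Fin.lastCases with
    | last => have := c'.isLt; simp at hlt; omega
    | cast c =>
      induction r using Fin.lastCases with
      | last =>
        have := c.isLt
        rcases hcell.2 with ⟨h, _⟩ | ⟨_, h⟩ <;> simp at h; omega
      | cast r =>
        induction r' using Fin.lastCases with
        | last => simp at h1
        | cast r' =>
          have hcell' : T.IsCell r c := by simpa [IsCell] using hcell
          have habv' : T.IsAbove r' r := by simpa [IsAbove] using habv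
          induction c' using Fin.lastCases with
          | last =>
            have hfree := mem_freeRows.1 ((mem_extChoices.1 d.2).1 (by simpa using h2))
            simp [hfree.2 c r' hcell' (by simpa using h0) habv'] at h1
          | cast c' =>
            exact T.no_bad_zero r c hcell' (by simpa using h0)
              ⟨⟨r', habv', by simpa using h1⟩, c', by simpa using hlt, by simpa using h2⟩
  diag_zero j hj h0 c := by
    induction j using Fin.lastCases with
    | last =>
      induction c using Fin.lastCases with
      | last => simpa using h0
      | cast c => simp
    | cast j =>
      induction c using Fin.lastCases with
      | last =>
        have hj' : T.west j = true := by simpa using hj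
        have h0' : T.filling j j = false := by simpa using h0
        by_contra hmem
        have hfree := mem_freeRows.1 ((mem_extChoices.1 d.2).1 (by simpa using hmem))
        simp [hfree.1 hj'] at h0'
      | cast c => simpa using T.diag_zero j (by simpa using hj) (by simpa using h0) c

section Extensions

variable {T : TypeBTableau n} {d : T.extChoices}

@[simp] theorem extS_west_castSucc (i : Fin n) : (extS T).west i.castSucc = T.west i := by
  simp [extS]
@[simp] theorem extS_west_last : (extS T).west (Fin.last n) = false := by simp [extS]
@[simp] theorem extS_filling_castSucc (r c : Fin n) :
    (extS T).filling r.castSucc c.castSucc = T.filling r c := by simp [extS]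
@[simp] theorem extS_filling_castSucc_last (r : Fin n) :
    (extS T).filling r.castSucc (Fin.last n) = false := by simp [extS]
@[simp] theorem extS_filling_last (c : Fin (n + 1)) : (extS T).filling (Fin.last n) c = false := by
  simp [extS]

@[simp] theorem extW_west_castSucc (i : Fin n) : (extW T d).west i.castSucc = T.west i := by
  simp [extW]
@[simp] theorem extW_west_last : (extW T d).west (Fin.last n) = true := by simp [extW]
@[simp] theorem extW_filling_castSucc (r c : Fin n) :
    (extW T d).filling r.castSucc c.castSucc = T.filling r c := by simp [extW]
@[simp] theorem extW_filling_castSucc_last (r : Fin n) :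
    (extW T d).filling r.castSucc (Fin.last n) = decide (r ∈ d.1.2) := by simp [extW]
@[simp] theorem extW_filling_last_castSucc (c : Fin n) :
    (extW T d).filling (Fin.last n) c.castSucc = false := by simp [extW]
@[simp] theorem extW_filling_last_last : (extW T d).filling (Fin.last n) (Fin.last n) = d.1.1 := by
  simp [extW]

@[simp] theorem restrict_extS : (extS T).restrict = T := by ext <;> simp
@[simp] theorem restrict_extW : (extW T d).restrict = T := by ext <;> simp

theorem extW_injective : (extW T).Injective := by
  intro d d' h
  have hb := congrArg (fun X => X.filling (Fin.last n) (Fin.last n)) h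
  have hs := fun r : Fin n => congrArg (fun X => X.filling r.castSucc (Fin.last n)) h
  simp only [extW_filling_last_last, extW_filling_castSucc_last, decide_eq_decide] at hb hs
  exact Subtype.ext (Prod.ext hb (Finset.ext hs))

theorem filling_last_castSucc (T : TypeBTableau (n + 1)) (c : Fin n) :
    T.filling (Fin.last n) c.castSucc = false := by
  by_contra h
  have := c.isLt
  rcases (T.support _ _ (Bool.of_not_eq_false h)).2 with ⟨-, h'⟩ | ⟨-, h'⟩ <;>
    simp at h' <;> omega

theorem filling_of_west_last_eq_false {T : TypeBTableau (n + 1)}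
    (hW : T.west (Fin.last n) = false) (r : Fin (n + 1)) : T.filling r (Fin.last n) = false := by
  by_contra h
  simpa [hW] using (T.support _ _ (Bool.of_not_eq_false h)).1

theorem extS_restrict {T : TypeBTableau (n + 1)} (hW : T.west (Fin.last n) = false) :
    extS T.restrict = T := by
  refine ext (funext fun i => ?_) (funext fun r => funext fun c => ?_)
  · induction i using Fin.lastCases <;> simp [hW]
  · induction r using Fin.lastCases <;> induction c using Fin.lastCases <;>
      simp [filling_of_west_last_eq_false hW, filling_last_castSucc]

theorem isFreeRow_restrict {T : TypeBTableau (n + 1)} {r : Fin n}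
    (h : T.filling r.castSucc (Fin.last n) = true) : T.restrict.IsFreeRow r := by
  constructor
  · intro hw
    by_contra h0
    simp [T.diag_zero r.castSucc hw (Bool.of_not_eq_true h0) (Fin.last n)] at h
  · intro c r' hc h0 ha
    by_contra h1
    exact T.no_bad_zero r.castSucc c.castSucc (by simpa [IsCell] using hc) h0
      ⟨⟨r'.castSucc, by simpa [IsAbove] using ha, Bool.of_not_eq_false h1⟩,
        ⟨Fin.last n, by simp, h⟩⟩

/-- The filling of the column of the last step, which is the leftmost column. -/
noncomputable def lastColumn (T : TypeBTableau (n + 1)) (hW : T.west (Fin.last n) = true) :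
    T.restrict.extChoices :=
  ⟨(T.filling (Fin.last n) (Fin.last n), univ.filter fun r => T.filling r.castSucc (Fin.last n)),
    mem_extChoices.2 ⟨fun r hr => mem_freeRows.2 (isFreeRow_restrict (by simpa using hr)), by
      obtain ⟨r, hr⟩ := T.col_one (Fin.last n) hW
      induction r using Fin.lastCases with
      | last => exact Or.inl hr
      | cast r => exact Or.inr ⟨r, by simpa using hr⟩⟩⟩

theorem extW_restrict {T : TypeBTableau (n + 1)} (hW : T.west (Fin.last n) = true) :
    extW T.restrict (lastColumn T hW) = T := by
  refine ext (funext fun i => ?_) (funext fun r => funext fun c => ?_)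
  · induction i using Fin.lastCases <;> simp [hW]
  · induction r using Fin.lastCases <;> induction c using Fin.lastCases <;>
      simp [lastColumn, filling_last_castSucc]

noncomputable def extend : (Σ T : TypeBTableau n, Option T.extChoices) → TypeBTableau (n + 1)
  | ⟨T, none⟩ => extS T
  | ⟨T, some d⟩ => extW T d

theorem restrict_extend (x : Σ T : TypeBTableau n, Option T.extChoices) :
    (extend x).restrict = x.1 := by
  rcases x with ⟨T, _ | d⟩ <;> simp [extend]

theorem extend_bijective : (extend (n := n)).Bijective := by
  constructor
  · rintro ⟨T, o⟩ ⟨S, o'⟩ h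
    obtain rfl : T = S := by simpa [restrict_extend] using congrArg restrict h
    have hW := congrArg (fun X => X.west (Fin.last n)) h
    rcases o with _ | d <;> rcases o' with _ | d' <;> simp [extend] at hW ⊢
    exact extW_injective h
  · intro T
    cases hW : T.west (Fin.last n)
    · exact ⟨⟨T.restrict, none⟩, extS_restrict hW⟩
    · exact ⟨⟨T.restrict, some (lastColumn T hW)⟩, extW_restrict hW⟩

theorem sum_eq_sum_extS_add_sum_extW {M : Type*} [AddCommMonoid M]
    (f : TypeBTableau (n + 1) → M) :
    ∑ T, f T = ∑ T : TypeBTableau n, (f (extS T) + ∑ d : T.extChoices, f (extW T d)) := by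
  rw [← Fintype.sum_bijective extend extend_bijective _ f fun _ => rfl, Fintype.sum_sigma]
  simp only [Fintype.sum_option]
  rfl

theorem isFreeRow_castSucc_iff (T : TypeBTableau (n + 1)) (r : Fin n) :
    T.IsFreeRow r.castSucc ↔ T.restrict.IsFreeRow r ∧
      (T.IsCell r.castSucc (Fin.last n) → T.filling r.castSucc (Fin.last n) = false →
        ∀ r', T.IsAbove r' r.castSucc → T.filling r' (Fin.last n) = false) := by
  have hcell : ∀ c, T.IsCell r.castSucc c.castSucc ↔ T.restrict.IsCell r c := fun c => by
    simp [IsCell]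
  have habove : ∀ r', T.IsAbove r'.castSucc r.castSucc ↔ T.restrict.IsAbove r' r := fun r' => by
    simp [IsAbove]
  constructor
  · rintro ⟨hdiag, hzero⟩
    exact ⟨⟨hdiag, fun c r' hc h0 ha => hzero _ _ ((hcell c).2 hc) h0 ((habove r').2 ha)⟩,
      fun hc h0 r' ha => hzero _ r' hc h0 ha⟩
  · rintro ⟨⟨hdiag, hzero⟩, hlast⟩
    refine ⟨hdiag, fun c r' hc h0 ha => ?_⟩
    induction c using Fin.lastCases with
    | last => exact hlast hc h0 r' ha
    | cast c =>
      induction r' using Fin.lastCases with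
      | last => exact filling_last_castSucc T c
      | cast r' => exact hzero c r' ((hcell c).1 hc) h0 ((habove r').1 ha)

theorem isFreeRow_extS_last : (extS T).IsFreeRow (Fin.last n) := by
  refine ⟨by simp, fun c r' hc => ?_⟩
  have := c.isLt
  rcases hc.2 with ⟨-, h⟩ | ⟨h, -⟩ <;> simp at h; omega

theorem isFreeRow_extS_castSucc {r : Fin n} : (extS T).IsFreeRow r.castSucc ↔ T.IsFreeRow r := by
  simp [isFreeRow_castSucc_iff, IsCell]

theorem isFreeRow_extW_last : (extW T d).IsFreeRow (Fin.last n) ↔ d.1.1 = true := by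
  refine ⟨fun h => by simpa using h.1 (by simp),
    fun hb => ⟨fun _ => by simpa, fun c r' hc => ?_⟩⟩
  induction c using Fin.lastCases with
  | last => simp [hb]
  | cast c =>
    have := c.isLt
    rcases hc.2 with ⟨h, -⟩ | ⟨-, h⟩ <;> simp at h; omega

theorem isFreeRow_extW_castSucc {r : Fin n} :
    (extW T d).IsFreeRow r.castSucc ↔ T.IsFreeRow r ∧
      (r ∈ d.1.2 ∨ (d.1.1 = false ∧ ∀ r' ∈ d.1.2, T.rowPos r ≤ T.rowPos r')) := by
  have hcell : (extW T d).IsCell r.castSucc (Fin.last n) := by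
    have := r.isLt
    cases hw : T.west r <;> simp [IsCell, hw]
  -- the new diagonal row is the top row
  have hlast : (extW T d).IsAbove (Fin.last n) r.castSucc := by
    have := r.isLt
    cases hw : T.west r <;> simp [IsAbove, hw]
  have habove : ∀ r', (extW T d).IsAbove r'.castSucc r.castSucc ↔ T.rowPos r' < T.rowPos r :=
    fun r' => by rw [← isAbove_iff_rowPos_lt]; simp [IsAbove]
  rw [isFreeRow_castSucc_iff, restrict_extW, Fin.forall_fin_succ']
  simp only [hcell, extW_filling_castSucc_last, extW_filling_last_last, habove, hlast,
    decide_eq_false_iff_not, forall_const]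
  constructor
  · rintro ⟨hfree, h⟩
    refine ⟨hfree, or_iff_not_imp_left.2 fun hr => ⟨(h hr).2, fun r' hr' => ?_⟩⟩
    exact not_lt.1 fun hlt => (h hr).1 r' hlt hr'
  · rintro ⟨hfree, hr | ⟨hb, hle⟩⟩
    · exact ⟨hfree, fun h => absurd hr h⟩
    · exact ⟨hfree, fun _ => ⟨fun r' hlt hr' => (hle r' hr').not_gt hlt, hb⟩⟩

end Extensions

open scoped Classical in
theorem card_freeRows_succ (T : TypeBTableau (n + 1)) :
    #T.freeRows = #(univ.filter fun r : Fin n => T.IsFreeRow r.castSucc) +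
      if T.IsFreeRow (Fin.last n) then 1 else 0 := by
  simp only [freeRows, card_filter, Fin.sum_univ_castSucc]

theorem card_freeRows_extS (T : TypeBTableau n) : #(extS T).freeRows = #T.freeRows + 1 := by
  rw [card_freeRows_succ, if_pos isFreeRow_extS_last]
  congr 2
  ext r
  simp [isFreeRow_extS_castSucc]

theorem card_freeRows_extW (T : TypeBTableau n) (d : T.extChoices) :
    #(extW T d).freeRows = (if d.1.1 = true then 1 else 0) +
      #(T.freeRows.filter fun r =>
        r ∈ d.1.2 ∨ (d.1.1 = false ∧ ∀ r' ∈ d.1.2, T.rowPos r ≤ T.rowPos r')) := by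
  rw [card_freeRows_succ, add_comm]
  simp only [isFreeRow_extW_last]
  congr 2
  ext r
  simp [isFreeRow_extW_castSucc]

theorem sum_pow_card_freeRows_extW (T : TypeBTableau n) (y : R) :
    ∑ d : T.extChoices, y ^ #(extW T d).freeRows =
      2 * y * (1 + y) ^ #T.freeRows - y ^ (#T.freeRows + 1) := by
  simp_rw [card_freeRows_extW]
  rw [sum_coe_sort T.extChoices fun p => y ^ ((if p.1 = true then 1 else 0) +
      #(T.freeRows.filter fun r =>
        r ∈ p.2 ∨ (p.1 = false ∧ ∀ r' ∈ p.2, T.rowPos r ≤ T.rowPos r'))),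
    extChoices, sum_filter, sum_product, Fintype.sum_bool]
  simp only [true_or, if_true, Bool.true_eq_false, Bool.false_eq_true, false_and, or_false,
    false_or, true_and, if_false, zero_add]
  set U := T.freeRows
  have hdiag : ∑ s ∈ U.powerset, y ^ (1 + #(U.filter (· ∈ s))) = y * (1 + y) ^ #U := by
    rw [← sum_powerset_pow_card_add_one]
    refine sum_congr rfl fun s hs => ?_
    rw [filter_mem_eq_inter, inter_eq_right.2 (mem_powerset.1 hs), add_comm]
  have hnondiag : ∑ s ∈ U.powerset, (if s.Nonempty then
      y ^ #(U.filter fun r => r ∈ s ∨ ∀ r' ∈ s, T.rowPos r ≤ T.rowPos r') else 0) =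
        y * (1 + y) ^ #U - y ^ (#U + 1) := by
    have hall : ∑ s ∈ U.powerset,
        y ^ #(U.filter fun r => r ∈ s ∨ ∀ r' ∈ s, T.rowPos r ≤ T.rowPos r') =
          y * (1 + y) ^ #U + y ^ #U - y ^ (#U + 1) :=
      sum_powerset_pow_card_filter_mem_or_le T.rowPos_injective U y
    have herase : U.powerset.filter (fun s => s.Nonempty) = U.powerset.erase ∅ := by
      ext s
      simp [nonempty_iff_ne_empty, and_comm]
    rw [← sum_filter, herase, sum_erase_eq_sub (empty_mem_powerset U), hall]
    simp only [notMem_empty, false_or, IsEmpty.forall_iff, implies_true, filter_true]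
    ring
  rw [hdiag, hnondiag]
  ring

theorem pow_card_freeRows_extS_add_sum_extW (T : TypeBTableau n) (y : R) :
    y ^ #(extS T).freeRows + ∑ d : T.extChoices, y ^ #(extW T d).freeRows =
      2 * y * (1 + y) ^ #T.freeRows := by
  rw [card_freeRows_extS, sum_pow_card_freeRows_extW]
  ring

theorem sum_mul_pow_card_freeRows_succ (f : TypeBTableau n → R) (y : R) :
    ∑ T : TypeBTableau (n + 1), f T.restrict * y ^ #T.freeRows =
      2 * y * ∑ T, f T * (1 + y) ^ #T.freeRows := by
  rw [sum_eq_sum_extS_add_sum_extW, mul_sum]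
  refine sum_congr rfl fun T _ => ?_
  simp only [restrict_extS, restrict_extW, ← mul_sum, ← mul_add,
    pow_card_freeRows_extS_add_sum_extW]
  ring

theorem sum_south_mul_pow_card_freeRows (f : TypeBTableau n → R) (y : R) :
    ∑ T : TypeBTableau (n + 1),
        (if T.west (Fin.last n) = false then f T.restrict else 0) * y ^ #T.freeRows =
      y * ∑ T, f T * y ^ #T.freeRows := by
  rw [sum_eq_sum_extS_add_sum_extW, mul_sum]
  refine sum_congr rfl fun T _ => ?_
  simp [card_freeRows_extS, pow_succ]
  ring

theorem prod_range_succ_add_natCast (y : R) (k : ℕ) :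
    ∏ t ∈ range (k + 1), (y + t) = y * ∏ t ∈ range k, (1 + y + t) := by
  rw [prod_range_succ', mul_comm, Nat.cast_zero, add_zero]
  congr 1
  exact prod_congr rfl fun t _ => by push_cast; ring

instance : Unique (TypeBTableau 0) where
  default := ⟨Fin.elim0, Fin.elim0, fun r => r.elim0, fun c => c.elim0, fun r => r.elim0,
    fun j => j.elim0⟩
  uniq _ := ext (funext fun i => i.elim0) (funext fun r => r.elim0)

theorem sum_pow_card_freeRows (n : ℕ) (y : R) :
    ∑ T : TypeBTableau n, y ^ #T.freeRows = 2 ^ n * ∏ j ∈ range n, (y + j) := by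
  induction n generalizing y with
  | zero => simp [Subsingleton.elim _ (∅ : Finset (Fin 0))]
  | succ n ih =>
    have h := sum_mul_pow_card_freeRows_succ (n := n) (fun _ => (1 : R)) y
    simp only [one_mul] at h
    rw [h, ih, prod_range_succ_add_natCast]
    ring

theorem card_eq (n : ℕ) : Fintype.card (TypeBTableau n) = 2 ^ n * n ! := by
  have h := sum_pow_card_freeRows (R := ℤ) n 1
  simp only [one_pow, sum_const, card_univ, nsmul_eq_mul, mul_one] at h
  rw [← prod_range_add_one_eq_factorial]
  zify
  rw [h]
  simp only [add_comm (1 : ℤ)]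

/-- Step `i`, counted from `0` at the northeast corner, exists and is a south step. -/
def IsSouth (T : TypeBTableau n) (i : ℕ) : Prop :=
  ∃ h : i < n, T.west ⟨i, h⟩ = false

instance (T : TypeBTableau n) (i : ℕ) : Decidable (T.IsSouth i) :=
  inferInstanceAs (Decidable (∃ _, _))

theorem isSouth_restrict {T : TypeBTableau (n + 1)} {i : ℕ} (hi : i < n) :
    T.restrict.IsSouth i ↔ T.IsSouth i :=
  ⟨fun ⟨_, h⟩ => ⟨by omega, h⟩, fun ⟨_, h⟩ => ⟨hi, h⟩⟩

theorem isSouth_self_iff (T : TypeBTableau (n + 1)) :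
    T.IsSouth n ↔ T.west (Fin.last n) = false :=
  ⟨fun ⟨_, h⟩ => h, fun h => ⟨n.lt_succ_self, h⟩⟩

theorem sum_isSouth_pair_mul_pow_card_freeRows (i m : ℕ) (y : R) :
    ∑ T : TypeBTableau (i + 2 + m),
        (if T.IsSouth i ∧ T.IsSouth (i + 1) then 1 else 0) * y ^ #T.freeRows =
      2 ^ (i + m) * (y + m) ^ 2 * ∏ t ∈ range (i + m), (y + t) := by
  induction m generalizing y with
  | zero =>
    have hpair : ∀ T : TypeBTableau (i + 2),
        (if T.IsSouth i ∧ T.IsSouth (i + 1) then (1 : R) else 0) =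
          if T.west (Fin.last (i + 1)) = false then (if T.restrict.IsSouth i then 1 else 0)
          else 0 := fun T => by
      simp only [← isSouth_self_iff, isSouth_restrict i.lt_succ_self]
      by_cases ha : T.IsSouth i <;> by_cases hb : T.IsSouth (i + 1) <;> simp [ha, hb]
    have hlast : ∀ T : TypeBTableau (i + 1), (if T.IsSouth i then (1 : R) else 0)
        = if T.west (Fin.last i) = false then 1 else 0 := fun T => by
      simp [isSouth_self_iff]
    simp only [hpair, hlast]
    rw [sum_south_mul_pow_card_freeRows fun S => if S.west (Fin.last i) = false then 1 else 0,
      sum_south_mul_pow_card_freeRows fun _ => (1 : R)]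
    simp [sum_pow_card_freeRows]
    ring
  | succ m ih =>
    have hpair : ∀ T : TypeBTableau (i + 2 + m + 1), (T.IsSouth i ∧ T.IsSouth (i + 1)) ↔
        (T.restrict.IsSouth i ∧ T.restrict.IsSouth (i + 1)) := fun T => by
      rw [isSouth_restrict (by omega), isSouth_restrict (by omega)]
    show ∑ T : TypeBTableau (i + 2 + m + 1), _ = _
    simp only [hpair]
    rw [sum_mul_pow_card_freeRows_succ
      (fun T => if T.IsSouth i ∧ T.IsSouth (i + 1) then 1 else 0), ih, ← add_assoc,
      prod_range_succ_add_natCast]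
    push_cast
    ring

theorem card_filter_isSouth_pair {N i : ℕ} (h : i + 2 ≤ N) :
    (#(univ.filter fun T : TypeBTableau N => T.IsSouth i ∧ T.IsSouth (i + 1)) : R) =
      2 ^ (N - 2) * (N - 2)! * ((N - 1 - i : ℕ) : R) ^ 2 := by
  obtain ⟨m, rfl⟩ : ∃ m, N = i + 2 + m := ⟨N - (i + 2), by omega⟩
  have hW := sum_isSouth_pair_mul_pow_card_freeRows i m (1 : R)
  simp only [one_pow, mul_one, sum_boole] at hW
  rw [hW, show i + 2 + m - 2 = i + m by omega, show i + 2 + m - 1 - i = m + 1 by omega,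
    ← prod_range_add_one_eq_factorial]
  push_cast
  simp only [add_comm (1 : R)]
  ring

theorem adjSouth_eq_card (T : TypeBTableau n) :
    T.adjSouth = #((range (n - 1)).filter fun i => T.IsSouth i ∧ T.IsSouth (i + 1)) := by
  refine card_bij (fun p _ => p.1.val) ?_ ?_ ?_
  · rintro ⟨a, b, hb⟩ hp
    simp only [mem_filter, mem_univ, true_and, mem_range] at hp ⊢
    obtain ⟨rfl, ha, hb'⟩ := hp
    exact ⟨by omega, ⟨a.isLt, ha⟩, ⟨hb, hb'⟩⟩
  · rintro ⟨a, b⟩ hp ⟨a', b'⟩ hp' (h : a.val = a'.val)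
    simp only [mem_filter, mem_univ, true_and] at hp hp'
    exact Prod.ext (Fin.ext h) (Fin.ext (show (b : ℕ) = b' by omega))
  · intro i hi
    obtain ⟨-, ⟨h₁, w₁⟩, ⟨h₂, w₂⟩⟩ := mem_filter.1 hi
    exact ⟨(⟨i, h₁⟩, ⟨i + 1, h₂⟩), by simp [w₁, w₂], rfl⟩

end TypeBTableau

theorem sum_range_sub_sq (N : ℕ) :
    ∑ i ∈ range N, ((N - i : ℕ) : ℝ) ^ 2 = N * (N + 1) * (2 * N + 1) / 6 := by
  induction N with
  | zero => simp
  | succ N ih =>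
    rw [sum_range_succ', sum_congr rfl fun i _ => by rw [Nat.add_sub_add_right], ih]
    push_cast
    ring

/-- The total number of pairs of adjacent south steps over all type-B permutation
tableaux of size `n` equals `((2n-1)/24) · |B_n|`; i.e. the expected number of
pairs of adjacent south steps in a uniformly random type-B permutation tableau of
size `n` is `(2n-1)/24`. -/
theorem expected_number_adjacent_south_steps (n : ℕ) (hn : 2 ≤ n) :
    (∑ T : TypeBTableau n, (T.adjSouth : ℝ)) =
      (2 * (n : ℝ) - 1) / 24 * (Fintype.card (TypeBTableau n) : ℝ) := by
  obtain ⟨k, rfl⟩ : ∃ k, n = k + 2 := ⟨n - 2, by omega⟩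
  calc ∑ T : TypeBTableau (k + 2), (T.adjSouth : ℝ)
      = ∑ i ∈ range (k + 1),
          (#(univ.filter fun T : TypeBTableau (k + 2) => T.IsSouth i ∧ T.IsSouth (i + 1)) :
            ℝ) := by
        simp only [TypeBTableau.adjSouth_eq_card, natCast_card_filter]
        exact sum_comm
    _ = ∑ i ∈ range (k + 1), 2 ^ k * (k ! : ℝ) * ((k + 1 - i : ℕ) : ℝ) ^ 2 :=
        sum_congr rfl fun i hi => by
          rw [TypeBTableau.card_filter_isSouth_pair (by simp at hi; omega)]
          rfl
    _ = (2 * ((k + 2 : ℕ) : ℝ) - 1) / 24 * (Fintype.card (TypeBTableau (k + 2)) : ℝ) := by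
        rw [← mul_sum, sum_range_sub_sq, TypeBTableau.card_eq]
        push_cast [Nat.factorial_succ]
        ring
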